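/- arXiv:1412.3685 — 4 statements merged into one kernel-verified Lean document; each statement's English description precedes it below -/
import Mathlib

section
/- The number of acyclic orientations of the complete bipartite graph K_{n₁,n₂} equals ∑_{k=1}^{min(n₁,n₂)+1} ((k−1)!)² · S(n₁+1,k) · S(n₂+1,k), where S denotes the Stirling numbers of the second kind. -/
/-- An orientation of a simple graph `G`, encoded as a function `f` where `f u v = true`
means the edge `{u,v}` is directed from `u` to `v`. Every edge gets exactly one direction,
and non-edges carry no direction. -/
def IsOrientation {V : Type*} (G : SimpleGraph V) (f : V → V → Bool) : Prop :=
  (∀ u v, G.Adj u v → f u v = !f v u) ∧ ∀ u v, ¬ G.Adj u v → f u v = false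

/-- The directed graph given by `f` contains no directed cycle. -/
def OrientAcyclic {V : Type*} (f : V → V → Bool) : Prop :=
  ∀ v, ¬ Relation.TransGen (fun a b => f a b = true) v v

/-- The number of acyclic orientations of `G`. -/
noncomputable def numAcyclicOrientations {V : Type*} (G : SimpleGraph V) : ℕ :=
  Nat.card {f : V → V → Bool // IsOrientation G f ∧ OrientAcyclic f}

/-- The Stirling number of the second kind `S(n,k)`: the number of partitions of an
`n`-element set into `k` non-empty parts. -/
noncomputable def stirling2 (n k : ℕ) : ℕ :=
  Nat.card {P : Finpartition (Finset.univ : Finset (Fin n)) // P.parts.card = k}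

/-!
Write `o a b` for the direction of the edge `{a, b}` of `K_{α,β}` (`true` meaning `a → b`). The
orientation is acyclic exactly when the rows of `o` are nested: two incomparable rows give a
directed 4-cycle, while nested rows let one rank the vertices strictly along the edges. A nested
matrix with `k` distinct nonempty rows is the threshold matrix `o a b ↔ k < f a + g b` of a unique
pair `f : α → {0, …, k}`, `g : β → {0, …, k}` attaining every positive value, namely the ranks of
the rows and columns in the chain of rows. Sending one new point to `0` turns such an `f` into a
surjection `α ⊕ {*} → {0, …, k}` normalised at `*`; these are a `1/(k+1)` share of all surjections,
which are partitions into `k + 1` blocks with labelled blocks, so there are `k! S(|α| + 1, k + 1)`.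
-/

open Finset Function Relation

section Orientation

variable {α β : Type*}

def IsNested (o : α → β → Bool) : Prop :=
  ∀ a a', o a ≤ o a' ∨ o a' ≤ o a

def orientationOf (o : α → β → Bool) : α ⊕ β → α ⊕ β → Bool
  | .inl a, .inr b => o a b
  | .inr b, .inl a => !o a b
  | _, _ => false

lemma isOrientation_orientationOf (o : α → β → Bool) :
    IsOrientation (completeBipartiteGraph α β) (orientationOf o) := by
  constructor <;> rintro (a | b) (a' | b') h <;> simp_all [orientationOf]

lemma orientationOf_restrict {f : α ⊕ β → α ⊕ β → Bool}
    (hf : IsOrientation (completeBipartiteGraph α β) f) :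
    orientationOf (fun a b => f (.inl a) (.inr b)) = f := by
  funext u v
  rcases u with a | b <;> rcases v with a' | b'
  · exact (hf.2 _ _ (by simp)).symm
  · rfl
  · rw [hf.1 _ _ (by simp)]; rfl
  · exact (hf.2 _ _ (by simp)).symm

lemma isNested_of_orientAcyclic {f : α ⊕ β → α ⊕ β → Bool}
    (hf : IsOrientation (completeBipartiteGraph α β) f) (hac : OrientAcyclic f) :
    IsNested (fun a b => f (.inl a) (.inr b)) := by
  intro a a'
  by_contra! h
  obtain ⟨b, hab, ha'b⟩ : ∃ b, f (.inl a) (.inr b) = true ∧ f (.inl a') (.inr b) = false := by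
    simpa [Pi.le_def, Bool.le_iff_imp] using h.1
  obtain ⟨b', ha'b', hab'⟩ : ∃ b, f (.inl a') (.inr b) = true ∧ f (.inl a) (.inr b) = false := by
    simpa [Pi.le_def, Bool.le_iff_imp] using h.2
  have back : ∀ x y, f (.inl x) (.inr y) = false → f (.inr y) (.inl x) = true := fun x y h => by
    rw [hf.1 _ _ (by simp), h]; rfl
  exact hac _ <| .tail (.tail (.tail (.single hab) (back _ _ ha'b)) ha'b') (back _ _ hab')

/-- The key `(row of a, 1)` on `a` and `(common part of the rows containing b, 0)` on `b` strictly
decreases, in the lexicographic order, along every edge. -/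
lemma orientAcyclic_orientationOf {o : α → β → Bool} (ho : IsNested o) :
    OrientAcyclic (orientationOf o) := by
  let key : α ⊕ β → Set β ×ₗ Bool
    | .inl a => toLex ({b | o a b}, true)
    | .inr b => toLex ({b' | ∀ a, o a b → o a b'}, false)
  have decreasing : ∀ u v, orientationOf o u v = true → key v < key u := by
    rintro (a | b) (a' | b') h
    · simp [orientationOf] at h
    · refine Prod.Lex.toLex_lt_toLex.2 ?_
      have : {b | ∀ a, o a b' → o a b} ≤ {b | o a b} := fun b hb => hb a h
      rcases this.lt_or_eq with hlt | heq
      · exact .inl hlt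
      · exact .inr ⟨heq, Bool.false_lt_true⟩
    · have hb : o a' b = false := by simpa [orientationOf] using h
      refine Prod.Lex.toLex_lt_toLex.2 <| .inl <| Set.ssubset_iff_exists.2
        ⟨fun b' hb' a hab => ?_, b, fun a hab => hab, by simp [hb]⟩
      rcases ho a a' with hle | hle
      · simpa [hb] using Bool.le_iff_imp.1 (hle b) hab
      · exact Bool.le_iff_imp.1 (hle b') hb'
    · simp [orientationOf] at h
  intro v hv
  exact lt_irrefl _ (transGen_eq_self (r := fun x y : Set β ×ₗ Bool => y < x) ▸
    TransGen.lift key decreasing v v hv)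

def orientationEquiv :
    {f // IsOrientation (completeBipartiteGraph α β) f ∧ OrientAcyclic f} ≃
      {o : α → β → Bool // IsNested o} where
  toFun f := ⟨fun a b => f.1 (.inl a) (.inr b), isNested_of_orientAcyclic f.2.1 f.2.2⟩
  invFun o := ⟨orientationOf o, isOrientation_orientationOf o.1, orientAcyclic_orientationOf o.2⟩
  left_inv f := Subtype.ext (orientationOf_restrict f.2.1)
  right_inv _ := rfl

end Orientation

section Chain

variable {β : Type*} [DecidableEq β] {R : Finset (Finset β)}

lemma card_filter_subset_lt_of_ssubset {T T' : Finset β} (hT' : T' ∈ R) (h : T ⊂ T') :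
    #{U ∈ R | U ⊆ T} < #{U ∈ R | U ⊆ T'} :=
  card_lt_card <|
    (ssubset_iff_of_subset (monotone_filter_right R fun _ _ hU => hU.trans h.subset)).2
    ⟨T', mem_filter.2 ⟨hT', subset_rfl⟩, fun hT => h.not_subset (mem_filter.1 hT).2⟩

/-- The members of `R` below `S` and those containing `b` cover `R` when `b ∈ S` and share `S`;
they are disjoint when `b ∉ S`. -/
lemma mem_iff_card_lt_card_add_card {S : Finset β} {b : β} (hS : ∀ U ∈ R, U ⊆ S ∨ S ⊆ U)
    (hSR : S.Nonempty → S ∈ R) :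
    b ∈ S ↔ #R < #{U ∈ R | U ⊆ S} + #{U ∈ R | b ∈ U} := by
  rw [← card_union_add_card_inter]
  by_cases hb : b ∈ S
  · have hunion : {U ∈ R | U ⊆ S} ∪ {U ∈ R | b ∈ U} = R := by
      ext U
      simp only [mem_union, mem_filter]
      exact ⟨fun h => h.elim And.left And.left,
        fun hU => (hS U hU).imp (⟨hU, ·⟩) fun h => ⟨hU, h hb⟩⟩
    have hSmem : S ∈ {U ∈ R | U ⊆ S} ∩ {U ∈ R | b ∈ U} := by
      simp only [mem_inter, mem_filter]
      exact ⟨⟨hSR ⟨b, hb⟩, subset_rfl⟩, hSR ⟨b, hb⟩, hb⟩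
    simp only [hb, hunion, true_iff]
    exact Nat.lt_add_of_pos_right (card_pos.2 ⟨S, hSmem⟩)
  · have hinter : {U ∈ R | U ⊆ S} ∩ {U ∈ R | b ∈ U} = ∅ := by
      ext U
      simp only [mem_inter, mem_filter, notMem_empty, iff_false]
      exact fun h => hb (h.1.2 h.2.2)
    simp only [hb, hinter, card_empty, add_zero, false_iff, not_lt]
    exact card_le_card (union_subset (filter_subset _ _) (filter_subset _ _))

variable (hR : IsChain (· ⊆ ·) (R : Set (Finset β)))
include hR

lemma injOn_card_filter_subset : Set.InjOn (fun T => #{U ∈ R | U ⊆ T}) R := by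
  intro T hT T' hT' h
  by_contra hne
  rcases hR.total hT hT' with hsub | hsub
  · exact (card_filter_subset_lt_of_ssubset hT' (hsub.ssubset_of_ne hne)).ne h
  · exact (card_filter_subset_lt_of_ssubset hT (hsub.ssubset_of_ne (Ne.symm hne))).ne' h

lemma image_card_filter_subset : R.image (fun T => #{U ∈ R | U ⊆ T}) = Icc 1 #R := by
  refine eq_of_subset_of_card_le (fun j hj => ?_) ?_
  · obtain ⟨T, hT, rfl⟩ := mem_image.1 hj
    exact mem_Icc.2 ⟨card_pos.2 ⟨T, mem_filter.2 ⟨hT, subset_rfl⟩⟩, card_filter_le _ _⟩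
  · rw [card_image_of_injOn (injOn_card_filter_subset hR), Nat.card_Icc, Nat.add_sub_cancel]

lemma card_filter_supset {T : Finset β} (hT : T ∈ R) :
    #{U ∈ R | T ⊆ U} = #R + 1 - #{U ∈ R | U ⊆ T} := by
  have hunion : {U ∈ R | U ⊆ T} ∪ {U ∈ R | T ⊆ U} = R := by
    ext U
    simp only [mem_union, mem_filter]
    constructor
    · rintro (h | h) <;> exact h.1
    · exact fun hU => (hR.total hU hT).imp (⟨hU, ·⟩) (⟨hU, ·⟩)
  have hinter : {U ∈ R | U ⊆ T} ∩ {U ∈ R | T ⊆ U} = {T} := by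
    ext U
    simp only [mem_inter, mem_filter, mem_singleton]
    constructor
    · exact fun h => h.1.2.antisymm h.2.2
    · rintro rfl; exact ⟨⟨hT, subset_rfl⟩, hT, subset_rfl⟩
  have := card_union_add_card_inter {U ∈ R | U ⊆ T} {U ∈ R | T ⊆ U}
  rw [hunion, hinter, card_singleton] at this
  omega

/-- An element `b ∈ T` lying in as few members of `R` as possible lies in no member strictly
below `T`: from such a member `U` and some `b' ∈ T \ U`, every member containing `b'` contains
`U`, hence `b`, and `U` itself contains `b` but not `b'`. -/
lemma exists_mem_forall_subset_of_mem {T : Finset β} (hT : T ∈ R) (hne : T.Nonempty) :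
    ∃ b ∈ T, ∀ U ∈ R, b ∈ U → T ⊆ U := by
  obtain ⟨b, hb, hmin⟩ := exists_min_image T (fun b => #{U ∈ R | b ∈ U}) hne
  refine ⟨b, hb, fun U hU hbU => ?_⟩
  by_contra hTU
  have hUT : U ⊆ T := (hR.total hT hU).resolve_left hTU
  obtain ⟨b', hb'T, hb'U⟩ := not_subset.1 hTU
  have : #{U' ∈ R | b' ∈ U'} < #{U' ∈ R | b ∈ U'} := by
    refine card_lt_card
      ⟨fun U' hU' => ?_, fun h => hb'U (mem_filter.1 (h (mem_filter.2 ⟨hU, hbU⟩))).2⟩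
    obtain ⟨hU'R, hb'U'⟩ := mem_filter.1 hU'
    refine mem_filter.2 ⟨hU'R, ?_⟩
    rcases hR.total hU hU'R with h | h
    · exact h hbU
    · exact absurd (h hb'U') hb'U
  exact (hmin b' hb'T).not_gt this

lemma exists_card_filter_mem_eq (hempty : ∅ ∉ R) {j : ℕ} (hj : j ∈ Icc 1 #R) :
    ∃ b, #{U ∈ R | b ∈ U} = j := by
  have : #R + 1 - j ∈ Icc 1 #R := by simp only [mem_Icc] at hj ⊢; omega
  rw [← image_card_filter_subset hR] at this
  obtain ⟨T, hT, hTj⟩ := mem_image.1 this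
  obtain ⟨b, hbT, hb⟩ := exists_mem_forall_subset_of_mem hR hT
    (nonempty_iff_ne_empty.2 fun h => hempty (h ▸ hT))
  refine ⟨b, ?_⟩
  rw [filter_congr fun U hU => ⟨hb U hU, fun h => h hbT⟩, card_filter_supset hR hT, hTj]
  simp only [mem_Icc] at hj
  omega

end Chain

section Matrix

variable {α β : Type*} [Fintype β]

def rowSet (o : α → β → Bool) (a : α) : Finset β := {b | o a b}

lemma rowSet_subset_rowSet_iff {o : α → β → Bool} {a a' : α} :
    rowSet o a ⊆ rowSet o a' ↔ o a ≤ o a' := by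
  simp [rowSet, subset_iff, Pi.le_def, Bool.le_iff_imp]

variable [Fintype α] [DecidableEq β]

def nonemptyRows (o : α → β → Bool) : Finset (Finset β) := (univ.image (rowSet o)).erase ∅

def rowRank (o : α → β → Bool) (a : α) : ℕ := #{T ∈ nonemptyRows o | T ⊆ rowSet o a}

def colRank (o : α → β → Bool) (b : β) : ℕ := #{T ∈ nonemptyRows o | b ∈ T}

variable {o : α → β → Bool}

lemma empty_notMem_nonemptyRows : ∅ ∉ nonemptyRows o := notMem_erase _ _

lemma rowSet_mem_nonemptyRows {a : α} (h : (rowSet o a).Nonempty) : rowSet o a ∈ nonemptyRows o :=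
  mem_erase.2 ⟨h.ne_empty, mem_image_of_mem _ (mem_univ a)⟩

lemma exists_rowSet_eq_of_mem_nonemptyRows {T : Finset β} (hT : T ∈ nonemptyRows o) :
    ∃ a, rowSet o a = T := by
  simpa using (mem_erase.1 hT).2

lemma rowRank_le (a : α) : rowRank o a ≤ #(nonemptyRows o) := card_filter_le _ _

lemma colRank_le (b : β) : colRank o b ≤ #(nonemptyRows o) := card_filter_le _ _

variable (ho : IsNested o)
include ho

lemma isChain_nonemptyRows : IsChain (· ⊆ ·) (nonemptyRows o : Set (Finset β)) := by
  intro T hT T' hT' _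
  obtain ⟨a, rfl⟩ := exists_rowSet_eq_of_mem_nonemptyRows hT
  obtain ⟨a', rfl⟩ := exists_rowSet_eq_of_mem_nonemptyRows hT'
  simpa only [rowSet_subset_rowSet_iff] using ho a a'

lemma apply_eq_true_iff_lt_rowRank_add_colRank (a : α) (b : β) :
    o a b = true ↔ #(nonemptyRows o) < rowRank o a + colRank o b := by
  rw [rowRank, colRank, ← mem_iff_card_lt_card_add_card (fun U hU => ?_) rowSet_mem_nonemptyRows]
  · simp [rowSet]
  · obtain ⟨a', rfl⟩ := exists_rowSet_eq_of_mem_nonemptyRows hU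
    simpa only [rowSet_subset_rowSet_iff] using ho a' a

lemma exists_rowRank_eq {j : ℕ} (hj : j ∈ Icc 1 #(nonemptyRows o)) : ∃ a, rowRank o a = j := by
  rw [← image_card_filter_subset (isChain_nonemptyRows ho)] at hj
  obtain ⟨T, hT, rfl⟩ := mem_image.1 hj
  obtain ⟨a, rfl⟩ := exists_rowSet_eq_of_mem_nonemptyRows hT
  exact ⟨a, rfl⟩

lemma exists_colRank_eq {j : ℕ} (hj : j ∈ Icc 1 #(nonemptyRows o)) : ∃ b, colRank o b = j :=
  exists_card_filter_mem_eq (isChain_nonemptyRows ho) empty_notMem_nonemptyRows hj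

end Matrix

section Threshold

variable {α β : Type*} {k : ℕ}

def threshold (k : ℕ) (f : α → Fin (k + 1)) (g : β → Fin (k + 1)) : α → β → Bool :=
  fun a b => decide (k < (f a : ℕ) + g b)

lemma isNested_threshold (f : α → Fin (k + 1)) (g : β → Fin (k + 1)) :
    IsNested (threshold k f g) := by
  intro a a'
  rcases le_total (f a) (f a') with h | h <;> [left; right] <;>
  · intro b
    simp only [threshold, Bool.le_iff_imp, decide_eq_true_eq]
    have : (f _ : ℕ) ≤ f _ := h
    omega

variable [Fintype β] {g : β → Fin (k + 1)}

def thresholdRow (g : β → Fin (k + 1)) (i : ℕ) : Finset β := {b | k < i + g b}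

lemma mem_thresholdRow {i : ℕ} {b : β} : b ∈ thresholdRow g i ↔ k < i + g b := by
  simp [thresholdRow]

lemma rowSet_threshold (f : α → Fin (k + 1)) (a : α) :
    rowSet (threshold k f g) a = thresholdRow g (f a) := by
  ext b; simp [rowSet, threshold, mem_thresholdRow]

lemma thresholdRow_zero : thresholdRow g 0 = ∅ := by
  ext b; simpa [mem_thresholdRow] using (g b).is_le

variable (hg : Set.Ioi 0 ⊆ Set.range g)
include hg

lemma thresholdRow_subset_thresholdRow_iff {i j : ℕ} (hi : i ≤ k) :
    thresholdRow g i ⊆ thresholdRow g j ↔ i ≤ j := by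
  refine ⟨fun h => ?_, fun h b hb => mem_thresholdRow.2 (by have := mem_thresholdRow.1 hb; omega)⟩
  by_contra! hji
  obtain ⟨b, hb⟩ := hg (show (0 : Fin (k + 1)) < ⟨k + 1 - i, by omega⟩ from
    Fin.lt_def.2 (by simp only [Fin.val_zero]; omega))
  have hgb : (g b : ℕ) = k + 1 - i := by rw [hb]
  have := mem_thresholdRow.1 (h (mem_thresholdRow.2 (show k < i + g b by omega)))
  omega

lemma injOn_thresholdRow : Set.InjOn (thresholdRow g) (Icc 1 k) := fun _ hi _ hj h =>
  le_antisymm ((thresholdRow_subset_thresholdRow_iff hg (mem_Icc.1 hi).2).1 h.le)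
    ((thresholdRow_subset_thresholdRow_iff hg (mem_Icc.1 hj).2).1 h.ge)

variable [DecidableEq β] [Fintype α] {f : α → Fin (k + 1)} (hf : Set.Ioi 0 ⊆ Set.range f)
include hf

lemma nonemptyRows_threshold :
    nonemptyRows (threshold k f g) = (Icc 1 k).image (thresholdRow g) := by
  ext T
  simp only [nonemptyRows, mem_erase, mem_image, mem_univ, true_and, rowSet_threshold, mem_Icc]
  constructor
  · rintro ⟨hne, a, rfl⟩
    have hpos : 1 ≤ (f a : ℕ) :=
      Nat.one_le_iff_ne_zero.2 fun h0 => hne (by rw [h0, thresholdRow_zero])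
    exact ⟨f a, ⟨hpos, (f a).is_le⟩, rfl⟩
  · rintro ⟨i, ⟨hi1, hik⟩, rfl⟩
    obtain ⟨a, ha⟩ := hf (show (0 : Fin (k + 1)) < ⟨i, by omega⟩ from Fin.lt_def.2 hi1)
    refine ⟨fun h => ?_, a, by rw [ha]⟩
    have := (thresholdRow_subset_thresholdRow_iff hg hik (j := 0)).1 (by rw [h, thresholdRow_zero])
    omega

lemma card_nonemptyRows_threshold : #(nonemptyRows (threshold k f g)) = k := by
  rw [nonemptyRows_threshold hg hf, card_image_of_injOn (injOn_thresholdRow hg), Nat.card_Icc,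
    Nat.add_sub_cancel]

lemma card_filter_nonemptyRows_threshold (p : Finset β → Prop) [DecidablePred p] :
    #{T ∈ nonemptyRows (threshold k f g) | p T} = #{i ∈ Icc 1 k | p (thresholdRow g i)} := by
  rw [nonemptyRows_threshold hg hf, filter_image,
    card_image_of_injOn ((injOn_thresholdRow hg).mono (filter_subset _ _))]

lemma rowRank_threshold (a : α) : rowRank (threshold k f g) a = f a := by
  rw [rowRank, card_filter_nonemptyRows_threshold hg hf, rowSet_threshold,
    filter_congr fun i hi => thresholdRow_subset_thresholdRow_iff hg (mem_Icc.1 hi).2]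
  have : {i ∈ Icc 1 k | i ≤ (f a : ℕ)} = Icc 1 (f a : ℕ) := by
    ext i; simp only [mem_filter, mem_Icc]; have := (f a).is_le; omega
  rw [this, Nat.card_Icc, Nat.add_sub_cancel]

lemma colRank_threshold (b : β) : colRank (threshold k f g) b = g b := by
  rw [colRank, card_filter_nonemptyRows_threshold hg hf]
  have : {i ∈ Icc 1 k | b ∈ thresholdRow g i} = Icc (k + 1 - g b) k := by
    ext i; simp only [mem_filter, mem_Icc, mem_thresholdRow]; have := (g b).is_le; omega
  rw [this, Nat.card_Icc]
  have := (g b).is_le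
  omega

end Threshold

lemma Ioi_zero_subset_range_of_exists {α : Type*} {k : ℕ} {F : α → Fin (k + 1)}
    (h : ∀ j ∈ Icc 1 k, ∃ a, (F a : ℕ) = j) : Set.Ioi 0 ⊆ Set.range F := fun j hj => by
  obtain ⟨a, ha⟩ := h j (mem_Icc.2 ⟨Fin.lt_def.1 hj, Fin.is_le j⟩)
  exact ⟨a, Fin.ext ha⟩

section NestedEquiv

variable {α β : Type*} [Fintype α] [Fintype β] [DecidableEq β]

def nestedEquiv (k : ℕ) :
    {o : α → β → Bool // IsNested o ∧ #(nonemptyRows o) = k} ≃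
      {f : α → Fin (k + 1) // Set.Ioi 0 ⊆ Set.range f} ×
        {g : β → Fin (k + 1) // Set.Ioi 0 ⊆ Set.range g} where
  toFun o :=
    (⟨fun a => ⟨rowRank o.1 a, Nat.lt_succ_of_le ((rowRank_le a).trans_eq o.2.2)⟩,
        Ioi_zero_subset_range_of_exists fun _ hj => exists_rowRank_eq o.2.1 (by rwa [o.2.2])⟩,
      ⟨fun b => ⟨colRank o.1 b, Nat.lt_succ_of_le ((colRank_le b).trans_eq o.2.2)⟩,
        Ioi_zero_subset_range_of_exists fun _ hj => exists_colRank_eq o.2.1 (by rwa [o.2.2])⟩)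
  invFun p :=
    ⟨threshold k p.1.1 p.2.1, isNested_threshold _ _, card_nonemptyRows_threshold p.2.2 p.1.2⟩
  left_inv o := by
    obtain ⟨o, ho, rfl⟩ := o
    ext a b
    exact Bool.eq_iff_iff.2 (by simpa [threshold] using
      (apply_eq_true_iff_lt_rowRank_add_colRank ho a b).symm)
  right_inv p := by
    obtain ⟨⟨f, hf⟩, ⟨g, hg⟩⟩ := p
    ext a
    · exact rowRank_threshold hg hf a
    · exact colRank_threshold hg hf a

end NestedEquiv

lemma exists_equiv_comp_eq_of_forall_eq_iff {α β γ : Type*} {f : α → β} {g : α → γ}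
    (hf : Surjective f) (hg : Surjective g) (h : ∀ a a', f a = f a' ↔ g a = g a') :
    ∃ e : β ≃ γ, e ∘ f = g := by
  have hcomp : ∀ a, g (surjInv hf (f a)) = g a := fun a => (h _ _).1 (surjInv_eq hf _)
  refine ⟨Equiv.ofBijective (g ∘ surjInv hf) ⟨fun y y' hyy' => ?_, fun c => ?_⟩, funext hcomp⟩
  · rw [← surjInv_eq hf y, ← surjInv_eq hf y']
    exact (h _ _).2 hyy'
  · obtain ⟨a, rfl⟩ := hg c
    exact ⟨f a, hcomp a⟩

namespace Finpartition

variable {α γ : Type*} [Fintype α] [DecidableEq α] [DecidableEq γ]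

def partOf (P : Finpartition (univ : Finset α)) (a : α) : P.parts :=
  ⟨P.part a, P.part_mem.2 (mem_univ a)⟩

lemma partOf_eq_partOf_iff {P : Finpartition (univ : Finset α)} {a a' : α} :
    P.partOf a = P.partOf a' ↔ a' ∈ P.part a := by
  rw [P.mem_part_iff_part_eq_part (mem_univ _) (mem_univ _), eq_comm, partOf, partOf,
    Subtype.mk.injEq]

lemma partOf_surjective (P : Finpartition (univ : Finset α)) : Surjective P.partOf := by
  rintro ⟨T, hT⟩
  obtain ⟨a, ha⟩ := P.nonempty_of_mem_parts hT
  exact ⟨a, Subtype.ext (P.part_eq_of_mem hT ha)⟩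

lemma eq_of_forall_part_eq {P Q : Finpartition (univ : Finset α)} (h : ∀ a, P.part a = Q.part a) :
    P = Q := by
  have parts_eq : ∀ R : Finpartition (univ : Finset α), R.parts = univ.image R.part := fun R => by
    ext T
    rw [mem_image]
    refine ⟨fun hT => ?_, fun ⟨a, _, ha⟩ => ha ▸ R.part_mem.2 (mem_univ a)⟩
    obtain ⟨a, ha⟩ := R.nonempty_of_mem_parts hT
    exact ⟨a, mem_univ a, R.part_eq_of_mem hT ha⟩
  ext1
  rw [parts_eq P, parts_eq Q, funext h]

def ker (h : α → γ) : Finpartition (univ : Finset α) := ofSetoid (Setoid.ker h)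

lemma mem_part_ker {h : α → γ} {a a' : α} : a' ∈ (ker h).part a ↔ h a = h a' :=
  mem_part_ofSetoid_iff_rel

lemma ker_comp_partOf (P : Finpartition (univ : Finset α)) (e : P.parts ≃ γ) :
    ker (e ∘ P.partOf) = P :=
  eq_of_forall_part_eq fun a => by
    ext a'
    rw [mem_part_ker, comp_apply, comp_apply, e.apply_eq_iff_eq, partOf_eq_partOf_iff]

lemma exists_equiv_comp_partOf_ker {h : α → γ} (hh : Surjective h) :
    ∃ e : (ker h).parts ≃ γ, e ∘ (ker h).partOf = h :=
  exists_equiv_comp_eq_of_forall_eq_iff (partOf_surjective _) hh fun _ _ => by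
    rw [partOf_eq_partOf_iff, mem_part_ker]

lemma card_surjective_ker_eq (P : Finpartition (univ : Finset α)) :
    Nat.card {h : {h : α → γ // Surjective h} // ker h.1 = P} = Nat.card (P.parts ≃ γ) := by
  refine (Nat.card_eq_of_bijective (fun e : P.parts ≃ γ =>
    ⟨⟨e ∘ P.partOf, e.surjective.comp (partOf_surjective P)⟩, ker_comp_partOf P e⟩)
    ⟨fun e e' hee' => ?_, ?_⟩).symm
  · exact Equiv.ext (congrFun ((partOf_surjective P).injective_comp_right
      (congrArg (fun h => h.1.1) hee')))
  · rintro ⟨⟨h, hh⟩, rfl⟩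
    obtain ⟨e, he⟩ := exists_equiv_comp_partOf_ker hh
    exact ⟨e, by simp only [he]⟩

variable [Fintype γ]

lemma card_parts_ker {h : α → γ} (hh : Surjective h) : #(ker h).parts = Fintype.card γ := by
  obtain ⟨e, -⟩ := exists_equiv_comp_partOf_ker hh
  rw [← Fintype.card_coe, Fintype.card_congr e]

end Finpartition

section Surjections

variable {α γ : Type*} [DecidableEq γ]

def surjectiveEquivProd (x₀ : α) (c₀ : γ) :
    {h : α → γ // Surjective h} ≃ γ × {h : α → γ // Surjective h ∧ h x₀ = c₀} where
  toFun h := (h.1 x₀, ⟨Equiv.swap (h.1 x₀) c₀ ∘ h.1,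
    (Equiv.surjective _).comp h.2, Equiv.swap_apply_left _ _⟩)
  invFun p := ⟨Equiv.swap p.1 c₀ ∘ p.2.1, (Equiv.surjective _).comp p.2.2.1⟩
  left_inv h := Subtype.ext (funext fun a => Equiv.swap_apply_self _ _ _)
  right_inv p := by
    obtain ⟨c, h, hh, hx₀⟩ := p
    have hc : Equiv.swap c c₀ (h x₀) = c := by rw [hx₀, Equiv.swap_apply_right]
    ext a <;> simp [hc, Equiv.swap_apply_self]

variable [Fintype γ] in
lemma card_surjective_apply_eq (x₀ : α) (c₀ : γ) :
    Nat.card {h : α → γ // Surjective h} =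
      Fintype.card γ * Nat.card {h : α → γ // Surjective h ∧ h x₀ = c₀} := by
  rw [Nat.card_congr (surjectiveEquivProd x₀ c₀), Nat.card_prod, Nat.card_eq_fintype_card]

variable [Fintype α] [DecidableEq α] [Fintype γ]

lemma card_surjective :
    Nat.card {h : α → γ // Surjective h} =
      Nat.card {P : Finpartition (univ : Finset α) // #P.parts = Fintype.card γ} *
        (Fintype.card γ).factorial := by
  let π (h : {h : α → γ // Surjective h}) :
      {P : Finpartition (univ : Finset α) // #P.parts = Fintype.card γ} :=
    ⟨Finpartition.ker h.1, Finpartition.card_parts_ker h.2⟩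
  calc Nat.card {h : α → γ // Surjective h}
      = ∑ P, Nat.card {h // π h = P} := by
        rw [← Nat.card_congr (Equiv.sigmaFiberEquiv π), Nat.card_sigma]
    _ = ∑ _P : {P : Finpartition (univ : Finset α) // #P.parts = Fintype.card γ},
          (Fintype.card γ).factorial := sum_congr rfl fun P _ => by
        have hparts : Fintype.card P.1.parts = Fintype.card γ := by rw [Fintype.card_coe, P.2]
        rw [Nat.card_congr (Equiv.subtypeEquivRight fun _ => Subtype.ext_iff),
          Finpartition.card_surjective_ker_eq, Nat.card_eq_fintype_card,
          Fintype.card_equiv (Fintype.equivOfCardEq hparts), hparts]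
    _ = _ := by rw [sum_const, card_univ, Nat.card_eq_fintype_card, smul_eq_mul]

end Surjections

lemma le_card_of_forall_mem_Icc_exists {β : Type*} [Fintype β] {F : β → ℕ} {m : ℕ}
    (h : ∀ j ∈ Icc 1 m, ∃ b, F b = j) : m ≤ Fintype.card β := by
  calc m = #(Icc 1 m) := by rw [Nat.card_Icc, Nat.add_sub_cancel]
    _ ≤ #(univ.image F) := card_le_card fun j hj => by
        obtain ⟨b, rfl⟩ := h j hj
        exact mem_image_of_mem F (mem_univ b)
    _ ≤ Fintype.card β := card_image_le.trans_eq card_univ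

section Counting

variable {α β : Type*} [Fintype α] [Fintype β] [DecidableEq β]

lemma card_nonemptyRows_le_min {o : α → β → Bool} (ho : IsNested o) :
    #(nonemptyRows o) ≤ min (Fintype.card α) (Fintype.card β) :=
  le_min (le_card_of_forall_mem_Icc_exists fun _ => exists_rowRank_eq ho)
    (le_card_of_forall_mem_Icc_exists fun _ => exists_colRank_eq ho)

lemma card_isNested :
    Nat.card {o : α → β → Bool // IsNested o} =
      ∑ k ∈ range (min (Fintype.card α) (Fintype.card β) + 1),
        Nat.card {f : α → Fin (k + 1) // Set.Ioi 0 ⊆ Set.range f} *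
          Nat.card {g : β → Fin (k + 1) // Set.Ioi 0 ⊆ Set.range g} := by
  let r (o : {o : α → β → Bool // IsNested o}) : Fin (min (Fintype.card α) (Fintype.card β) + 1) :=
    ⟨#(nonemptyRows o.1), Nat.lt_succ_of_le (card_nonemptyRows_le_min o.2)⟩
  rw [← Nat.card_congr (Equiv.sigmaFiberEquiv r), Nat.card_sigma,
    ← Fin.sum_univ_eq_sum_range (fun k => Nat.card {f : α → Fin (k + 1) // _} * _)]
  refine sum_congr rfl fun k _ => ?_
  rw [← Nat.card_prod, ← Nat.card_congr (nestedEquiv k)]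
  exact Nat.card_congr
    { toFun o := ⟨o.1.1, o.1.2, congrArg Fin.val o.2⟩
      invFun o := ⟨⟨o.1, o.2.1⟩, Fin.ext o.2.2⟩
      left_inv _ := rfl
      right_inv _ := rfl }

end Counting

lemma card_surjective_apply_last_eq_zero (n k : ℕ) :
    Nat.card {h : Fin (n + 1) → Fin (k + 1) // Surjective h ∧ h (Fin.last n) = 0} =
      k.factorial * stirling2 (n + 1) (k + 1) := by
  have h := (card_surjective_apply_eq (Fin.last n) (0 : Fin (k + 1))).symm.trans card_surjective
  rw [Fintype.card_fin, Nat.factorial_succ, mul_left_comm] at h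
  exact (Nat.eq_of_mul_eq_mul_left k.succ_pos h).trans (mul_comm _ _)

def extendByZeroEquiv (n k : ℕ) :
    {f : Fin n → Fin (k + 1) // Set.Ioi 0 ⊆ Set.range f} ≃
      {h : Fin (n + 1) → Fin (k + 1) // Surjective h ∧ h (Fin.last n) = 0} where
  toFun f := ⟨Fin.snoc f.1 0, fun j => by
      rcases eq_or_ne j 0 with rfl | hj
      · exact ⟨Fin.last n, Fin.snoc_last _ _⟩
      · obtain ⟨a, ha⟩ := f.2 (Fin.pos_iff_ne_zero.2 hj)
        exact ⟨a.castSucc, by rw [Fin.snoc_castSucc, ha]⟩,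
    Fin.snoc_last _ _⟩
  invFun h := ⟨Fin.init h.1, fun j hj => by
      obtain ⟨i, hi⟩ := h.2.1 j
      induction i using Fin.lastCases with
      | last => exact absurd (hi ▸ h.2.2) (Fin.pos_iff_ne_zero.1 hj)
      | cast a => exact ⟨a, hi⟩⟩
  left_inv f := Subtype.ext (Fin.init_snoc (α := fun _ => Fin (k + 1)) 0 f.1)
  right_inv h := Subtype.ext <| by
    simpa only [h.2.2] using Fin.snoc_init_self (α := fun _ => Fin (k + 1)) h.1

lemma card_Ioi_zero_subset_range (n k : ℕ) :
    Nat.card {f : Fin n → Fin (k + 1) // Set.Ioi 0 ⊆ Set.range f} =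
      k.factorial * stirling2 (n + 1) (k + 1) := by
  rw [Nat.card_congr (extendByZeroEquiv n k), card_surjective_apply_last_eq_zero]

theorem acyclicOrientations_completeBipartite_general (n₁ n₂ : ℕ) :
    numAcyclicOrientations (completeBipartiteGraph (Fin n₁) (Fin n₂)) =
      ∑ k ∈ Finset.Icc 1 (min n₁ n₂ + 1),
        (Nat.factorial (k - 1)) ^ 2 * stirling2 (n₁ + 1) k * stirling2 (n₂ + 1) k := by
  rw [numAcyclicOrientations, Nat.card_congr orientationEquiv, card_isNested,
    Fintype.card_fin, Fintype.card_fin, ← Ico_add_one_right_eq_Icc, sum_Ico_eq_sum_range,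
    Nat.add_sub_cancel]
  refine sum_congr rfl fun k _ => ?_
  rw [card_Ioi_zero_subset_range, card_Ioi_zero_subset_range, add_comm 1 k, Nat.add_sub_cancel]
  ring

/-- The number of acyclic orientations of the complete bipartite graph `K_{n₁,n₂}` is
`∑_{k=1}^{min(n₁,n₂)+1} ((k−1)!)² S(n₁+1,k) S(n₂+1,k)`. -/
theorem acyclicOrientations_completeBipartite (n₁ n₂ : ℕ) (h₁ : 1 ≤ n₁) (h₂ : 1 ≤ n₂) :
    numAcyclicOrientations (completeBipartiteGraph (Fin n₁) (Fin n₂)) =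
      ∑ k ∈ Finset.Icc 1 (min n₁ n₂ + 1),
        (Nat.factorial (k - 1)) ^ 2 * stirling2 (n₁ + 1) k * stirling2 (n₂ + 1) k :=
  acyclicOrientations_completeBipartite_general n₁ n₂
end

section
/- Let n₁ > 1 and n₂ ≥ 1, and let G be the graph obtained from the complete bipartite graph K_{n₁,n₂} by adding one edge e₁ joining two vertices in the bipartite block of size n₁. Then a(G) = a(K_{n₁,n₂}) + a(K_{n₁−1,n₂}). -/
/-!
Put `K = K_{n₁,n₂}` and `G = K + a₁a₂`. An acyclic orientation of `K` extends to `G` by orienting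
`a₁ → a₂` unless `a₂` reaches `a₁`, and by orienting `a₂ → a₁` unless `a₁` reaches `a₂`; as both
cannot happen, `a(G) = a(K) + N`, where `N` counts the acyclic orientations of `K` in which
neither of `a₁, a₂` reaches the other. Since `a₁` and `a₂` are non-adjacent twins, such an
orientation gives them the same arcs (otherwise a directed path of length two joins them), so it
is the pullback of an acyclic orientation of `K - a₂ ≅ K_{n₁-1,n₂}` along the map merging `a₂`
into `a₁`. Conversely, this pullback never creates a path between `a₁` and `a₂`, since it would
become a cycle through `a₁`. Hence `N = a(K_{n₁-1,n₂})`.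
-/

open Function Relation SimpleGraph

variable {V W : Type*}

abbrev AcyclicOrientation (G : SimpleGraph V) : Type _ :=
  {f : V → V → Bool // IsOrientation G f ∧ OrientAcyclic f}

abbrev Reaches (f : V → V → Bool) : V → V → Prop :=
  TransGen fun a b => f a b = true

lemma Reaches.not_symm {f : V → V → Bool} (hf : OrientAcyclic f) {u v : V} (huv : Reaches f u v) :
    ¬Reaches f v u :=
  fun hvu => hf u (huv.trans hvu)

lemma Relation.TransGen.of_sup_pair {α : Type*} {r : α → α → Prop} {a b x y : α}
    (h : TransGen (fun x y => r x y ∨ x = a ∧ y = b) x y) :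
    TransGen r x y ∨ ReflTransGen r x a ∧ ReflTransGen r b y := by
  induction h with
  | single hxy =>
    rcases hxy with hxy | ⟨rfl, rfl⟩
    exacts [.inl (.single hxy), .inr ⟨.refl, .refl⟩]
  | tail _ hyz ih =>
    rcases hyz with hyz | ⟨rfl, rfl⟩
    · rcases ih with hxy | ⟨hxa, hby⟩
      exacts [.inl (hxy.tail hyz), .inr ⟨hxa, hby.tail hyz⟩]
    · rcases ih with hxy | ⟨hxa, -⟩
      exacts [.inr ⟨hxy.to_reflTransGen, .refl⟩, .inr ⟨hxa, .refl⟩]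

lemma Nat.card_subtype_add_card_subtype_of_forall_or {α : Type*} [Finite α] {p q : α → Prop}
    (h : ∀ x, p x ∨ q x) :
    Nat.card {x // p x} + Nat.card {x // q x} = Nat.card α + Nat.card {x // p x ∧ q x} := by
  have hunion : {x | p x} ∪ {x | q x} = Set.univ := Set.eq_univ_of_forall h
  have := Set.ncard_union_add_ncard_inter {x | p x} {x | q x}
  rw [hunion, Set.ncard_univ] at this
  simp only [← Nat.card_coe_set_eq] at this
  exact this.symm

lemma completeBipartiteGraph_comap_sumMap {α β γ δ : Type*} (f : α → γ) (g : β → δ) :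
    (completeBipartiteGraph γ δ).comap (Sum.map f g) = completeBipartiteGraph α β := by
  ext (x | x) (y | y) <;> simp

section Pullback

variable {G : SimpleGraph W} {f : W → W → Bool}

lemma IsOrientation.comap (hf : IsOrientation G f) (ι : V → W) :
    IsOrientation (G.comap ι) (f on ι) :=
  ⟨fun _ _ h => hf.1 _ _ h, fun _ _ h => hf.2 _ _ h⟩

lemma Reaches.of_comap {ι : V → W} {x y : V} (h : Reaches (f on ι) x y) :
    Reaches f (ι x) (ι y) :=
  TransGen.lift ι (fun _ _ h => h) _ _ h

lemma OrientAcyclic.comap (hf : OrientAcyclic f) (ι : V → W) : OrientAcyclic (f on ι) :=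
  fun x hx => hf (ι x) (Reaches.of_comap hx)

lemma OrientAcyclic.not_reaches_comap_of_eq (hf : OrientAcyclic f) {ι : V → W} {x y : V}
    (hxy : ι x = ι y) : ¬Reaches (f on ι) x y :=
  fun h => by
    have h' := Reaches.of_comap h
    rw [hxy] at h'
    exact hf _ h'

end Pullback

section SetArc

variable [DecidableEq V] {G : SimpleGraph V} {f : V → V → Bool} {u v : V}

def setArc (f : V → V → Bool) (u v : V) (b : Bool) : V → V → Bool :=
  fun x y => if x = u ∧ y = v then b else f x y

@[simp] lemma setArc_apply_self (b : Bool) : setArc f u v b u v = b := by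
  simp [setArc]

@[simp] lemma setArc_setArc (b b' : Bool) : setArc (setArc f u v b) u v b' = setArc f u v b' := by
  funext x y
  simp only [setArc]
  split_ifs <;> rfl

lemma setArc_eq_self {b : Bool} (h : f u v = b) : setArc f u v b = f := by
  funext x y
  simp only [setArc]
  split_ifs with hxy
  · rw [hxy.1, hxy.2, h]
  · rfl

lemma orientAcyclic_setArc_true_iff (huv : u ≠ v) :
    OrientAcyclic (setArc f u v true) ↔ OrientAcyclic f ∧ ¬Reaches f v u := by
  have hrel : (fun x y => setArc f u v true x y = true) =
      fun x y => f x y = true ∨ x = u ∧ y = v := by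
    funext x y
    simp only [setArc]
    split_ifs with h <;> simp [h]
  simp only [OrientAcyclic, hrel]
  constructor
  · intro h
    refine ⟨fun x hx => h x (TransGen.mono (fun _ _ => .inl) _ _ hx), fun hvu => h u ?_⟩
    exact .head (.inr ⟨rfl, rfl⟩) (TransGen.mono (fun _ _ => .inl) _ _ hvu)
  · rintro ⟨hf, hvu⟩ x hx
    rcases hx.of_sup_pair with hx | ⟨hxu, hvx⟩
    · exact hf x hx
    · rcases reflTransGen_iff_eq_or_transGen.mp (hvx.trans hxu) with h | h
      exacts [huv h, hvu h]

lemma IsOrientation.sup_edge_setArc_true (hf : IsOrientation G f) (huv : u ≠ v)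
    (hnadj : ¬G.Adj u v) : IsOrientation (G ⊔ edge u v) (setArc f u v true) := by
  have hfuv := hf.2 u v hnadj
  have hfvu := hf.2 v u fun h => hnadj h.symm
  constructor
  · intro x y hxy
    simp only [sup_adj, edge_adj] at hxy
    simp only [setArc]
    grind [hf.1 x y]
  · intro x y hxy
    simp only [sup_adj, edge_adj] at hxy
    simp only [setArc]
    grind [hf.2 x y]

lemma IsOrientation.setArc_false {g : V → V → Bool} (hg : IsOrientation (G ⊔ edge u v) g)
    (hguv : g u v = true) (hnadj : ¬G.Adj u v) : IsOrientation G (setArc g u v false) := by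
  have hnadj' : ¬G.Adj v u := fun h => hnadj h.symm
  constructor
  · intro x y hxy
    simp only [setArc]
    grind [hg.1 x y]
  · intro x y hxy
    simp only [setArc]
    grind [hg.1 x y, hg.2 x y]

lemma OrientAcyclic.setArc_false {g : V → V → Bool} (hg : OrientAcyclic g)
    (hguv : g u v = true) (huv : u ≠ v) :
    OrientAcyclic (setArc g u v false) ∧ ¬Reaches (setArc g u v false) v u := by
  rwa [← orientAcyclic_setArc_true_iff huv, setArc_setArc, setArc_eq_self hguv]

lemma card_acyclicOrientation_sup_edge_apply_eq_true (huv : u ≠ v) (hnadj : ¬G.Adj u v) :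
    Nat.card {g : AcyclicOrientation (G ⊔ edge u v) // g.1 u v = true} =
      Nat.card {f : AcyclicOrientation G // ¬Reaches f.1 v u} :=
  Nat.card_congr
    { toFun g := ⟨⟨setArc g.1.1 u v false, g.1.2.1.setArc_false g.2 hnadj,
        (g.1.2.2.setArc_false g.2 huv).1⟩, (g.1.2.2.setArc_false g.2 huv).2⟩
      invFun f := ⟨⟨setArc f.1.1 u v true, f.1.2.1.sup_edge_setArc_true huv hnadj,
        (orientAcyclic_setArc_true_iff huv).2 ⟨f.1.2.2, f.2⟩⟩, setArc_apply_self _⟩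
      left_inv g := by simp [setArc_eq_self g.2]
      right_inv f := by simp [setArc_eq_self (f.1.2.1.2 u v hnadj)] }

end SetArc

theorem numAcyclicOrientations_sup_edge [Finite V] {G : SimpleGraph V} {u v : V} (huv : u ≠ v)
    (hnadj : ¬G.Adj u v) :
    numAcyclicOrientations (G ⊔ edge u v) = numAcyclicOrientations G +
      Nat.card {f : AcyclicOrientation G // ¬Reaches f.1 v u ∧ ¬Reaches f.1 u v} := by
  classical
  have hsplit : numAcyclicOrientations (G ⊔ edge u v) =
      Nat.card {g : AcyclicOrientation (G ⊔ edge u v) // g.1 u v = true} +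
        Nat.card {g : AcyclicOrientation (G ⊔ edge u v) // g.1 v u = true} := by
    rw [numAcyclicOrientations, ← Nat.card_sum]
    refine Nat.card_congr ((Equiv.sumCompl _).symm.trans
      (Equiv.sumCongr (Equiv.refl _) (Equiv.subtypeEquivRight fun g => ?_)))
    have := g.2.1.1 u v (.inr ((edge_adj _ _ _ _).2 ⟨.inl ⟨rfl, rfl⟩, huv⟩))
    cases h : g.1 v u <;> simp [this, h]
  rw [hsplit, card_acyclicOrientation_sup_edge_apply_eq_true huv hnadj, edge_comm,
    card_acyclicOrientation_sup_edge_apply_eq_true huv.symm fun h => hnadj h.symm,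
    numAcyclicOrientations]
  exact Nat.card_subtype_add_card_subtype_of_forall_or fun f =>
    not_and_or.1 fun h => h.2.not_symm f.2.2 h.1

section Twins

variable {G : SimpleGraph V} {f : V → V → Bool} {u v : V}

lemma IsOrientation.apply_left_eq_of_twins (hf : IsOrientation G f)
    (htwin : ∀ w, G.Adj u w ↔ G.Adj v w) (hnuv : ¬Reaches f u v) (hnvu : ¬Reaches f v u) (y : V) :
    f u y = f v y := by
  by_cases hy : G.Adj u y
  · have hfu := hf.1 u y hy
    have hfv := hf.1 v y ((htwin y).1 hy)
    cases hu : f u y <;> cases hv : f v y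
    · rfl
    · exact (hnvu (.head hv (.single (by simpa [hu] using hfu)))).elim
    · exact (hnuv (.head hu (.single (by simpa [hv] using hfv)))).elim
    · rfl
  · rw [hf.2 u y hy, hf.2 v y (mt (htwin y).2 hy)]

lemma IsOrientation.apply_right_eq_of_twins (hf : IsOrientation G f)
    (htwin : ∀ w, G.Adj u w ↔ G.Adj v w) (hnuv : ¬Reaches f u v) (hnvu : ¬Reaches f v u) (x : V) :
    f x u = f x v := by
  by_cases hx : G.Adj x u
  · rw [hf.1 x u hx, hf.1 x v (((htwin x).1 hx.symm).symm),
      hf.apply_left_eq_of_twins htwin hnuv hnvu]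
  · rw [hf.2 x u hx, hf.2 x v fun h => hx ((htwin x).2 h.symm).symm]

variable [DecidableEq V]

lemma comap_update_id_eq_self_of_twins (htwin : ∀ w, G.Adj u w ↔ G.Adj v w) :
    G.comap (update id v u) = G := by
  ext x y
  simp only [comap_adj, update, id]
  split_ifs with hx hy hy <;> subst_vars
  · simp
  · exact htwin y
  · rw [adj_comm, htwin x, adj_comm]
  · rfl

lemma IsOrientation.onFun_update_id_eq_self_of_twins (hf : IsOrientation G f)
    (htwin : ∀ w, G.Adj u w ↔ G.Adj v w) (hnuv : ¬Reaches f u v) (hnvu : ¬Reaches f v u) :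
    (f on update id v u) = f := by
  funext x y
  simp only [onFun, update, id]
  split_ifs with hx hy hy <;> subst_vars
  · rw [hf.apply_left_eq_of_twins htwin hnuv hnvu, hf.apply_right_eq_of_twins htwin hnuv hnvu]
  · exact hf.apply_left_eq_of_twins htwin hnuv hnvu y
  · exact hf.apply_right_eq_of_twins htwin hnuv hnvu x
  · rfl

end Twins

theorem card_acyclicOrientation_not_reaches_of_twins {G : SimpleGraph V} {u v : V} (huv : u ≠ v)
    (htwin : ∀ w, G.Adj u w ↔ G.Adj v w) (ι : W → V) (hι : Injective ι)
    (hrange : Set.range ι = {v}ᶜ) :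
    Nat.card {f : AcyclicOrientation G // ¬Reaches f.1 v u ∧ ¬Reaches f.1 u v} =
      numAcyclicOrientations (G.comap ι) := by
  classical
  have hmem : ∀ x, update id v u x ∈ Set.range ι := by
    intro x
    rw [hrange]
    by_cases hx : x = v <;> simp [hx, huv]
  choose ρ hρ using hmem
  have hιρ : ι ∘ ρ = update id v u := funext hρ
  have hρι : ρ ∘ ι = id := by
    funext w
    refine hι ?_
    have : ι w ∈ ({v}ᶜ : Set V) := hrange ▸ Set.mem_range_self w
    rw [Set.mem_compl_singleton_iff] at this
    simp [hρ, this]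
  have hρuv : ρ u = ρ v := hι (by simp [hρ, huv])
  refine Nat.card_congr
    { toFun f := ⟨f.1.1 on ι, f.1.2.1.comap ι, f.1.2.2.comap ι⟩
      invFun h := ⟨⟨h.1 on ρ, ?_, h.2.2.comap ρ⟩,
        h.2.2.not_reaches_comap_of_eq hρuv.symm, h.2.2.not_reaches_comap_of_eq hρuv⟩
      left_inv f := Subtype.ext <| Subtype.ext <| by
        change (f.1.1 on (ι ∘ ρ)) = f.1.1
        rw [hιρ, f.1.2.1.onFun_update_id_eq_self_of_twins htwin f.2.2 f.2.1]
      right_inv h := Subtype.ext <| by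
        change (h.1 on (ρ ∘ ι)) = h.1
        rw [hρι]
        rfl }
  simpa [hιρ, comap_update_id_eq_self_of_twins htwin] using h.2.1.comap ρ

theorem acyclicOrientations_completeBipartite_addEdge_general (n₁ n₂ : ℕ)
    (a₁ a₂ : Fin n₁) (ha : a₁ ≠ a₂) :
    numAcyclicOrientations
        (completeBipartiteGraph (Fin n₁) (Fin n₂) ⊔
          SimpleGraph.fromEdgeSet {s(Sum.inl a₁, Sum.inl a₂)}) =
      numAcyclicOrientations (completeBipartiteGraph (Fin n₁) (Fin n₂)) +
        numAcyclicOrientations (completeBipartiteGraph (Fin (n₁ - 1)) (Fin n₂)) := by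
  obtain ⟨m, rfl⟩ := Nat.exists_eq_add_one.2 a₁.pos
  have hne : (Sum.inl a₁ : Fin (m + 1) ⊕ Fin n₂) ≠ Sum.inl a₂ := Sum.inl_injective.ne ha
  have htwin : ∀ w, (completeBipartiteGraph (Fin (m + 1)) (Fin n₂)).Adj (Sum.inl a₁) w ↔
      (completeBipartiteGraph (Fin (m + 1)) (Fin n₂)).Adj (Sum.inl a₂) w := by
    rintro (w | w) <;> simp
  have hrange : Set.range (Sum.map a₂.succAbove (id : Fin n₂ → Fin n₂)) = {Sum.inl a₂}ᶜ := by
    ext (x | x) <;> simp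
  rw [Nat.add_sub_cancel, ← edge, numAcyclicOrientations_sup_edge hne (by simp),
    card_acyclicOrientation_not_reaches_of_twins hne htwin _
      (Sum.map_injective.2 ⟨Fin.succAbove_right_injective, injective_id⟩) hrange,
    completeBipartiteGraph_comap_sumMap]

/-- If `G` is obtained from `K_{n₁,n₂}` (with `n₁ > 1`) by adding an edge joining two
vertices of the bipartite block of size `n₁`, then
`a(G) = a(K_{n₁,n₂}) + a(K_{n₁−1,n₂})`. -/
theorem acyclicOrientations_completeBipartite_addEdge (n₁ n₂ : ℕ) (h₁ : 1 < n₁) (h₂ : 1 ≤ n₂)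
    (a₁ a₂ : Fin n₁) (ha : a₁ ≠ a₂) :
    numAcyclicOrientations
        (completeBipartiteGraph (Fin n₁) (Fin n₂) ⊔
          SimpleGraph.fromEdgeSet {s(Sum.inl a₁, Sum.inl a₂)}) =
      numAcyclicOrientations (completeBipartiteGraph (Fin n₁) (Fin n₂)) +
        numAcyclicOrientations (completeBipartiteGraph (Fin (n₁ - 1)) (Fin n₂)) :=
  acyclicOrientations_completeBipartite_addEdge_general n₁ n₂ a₁ a₂ ha
end

section
/- Let n₁ > 1 and n₂ ≥ 1, and fix two vertices a₁, a₂ in the bipartite block A of size n₁ of the complete bipartite graph K_{n₁,n₂}. The number of acyclic orientations of K_{n₁,n₂} in which, for every vertex b of the other block B, the edge {a₁,b} is oriented in the same direction (towards or away from B) as the edge {a₂,b}, equals a(K_{n₁−1,n₂}). -/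
/-!
Merging `a₂` into `a₁` is a retraction of `K_{n₁,n₂}` onto a copy of `K_{n₁-1,n₂}` that preserves
adjacency. An orientation in which `a₁` and `a₂` are equivalent is exactly the pullback along this
retraction of its restriction to the copy, and pulling back along any map preserves acyclicity
(a directed cycle maps to a directed cycle), so restriction is a bijection onto the acyclic
orientations of `K_{n₁-1,n₂}`.
-/

open Function

section Pullback

variable {V W : Type*} {f : V → V → Bool}

theorem IsOrientation.onFun {G : SimpleGraph V} {H : SimpleGraph W} (hf : IsOrientation G f)
    {φ : W → V} (hφ : ∀ x y, H.Adj x y ↔ G.Adj (φ x) (φ y)) : IsOrientation H (f on φ) :=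
  ⟨fun _ _ h => hf.1 _ _ ((hφ _ _).1 h), fun _ _ h => hf.2 _ _ (mt (hφ _ _).2 h)⟩

theorem OrientAcyclic.onFun (hf : OrientAcyclic f) (φ : W → V) : OrientAcyclic (f on φ) :=
  fun v hv => hf (φ v) (hv.lift φ fun _ _ h => h)

end Pullback

section Retraction

variable {V W : Type*} {G : SimpleGraph V} {ι : W → V} {p : V → W}

def invariantAcyclicOrientationsEquiv (hpι : LeftInverse p ι)
    (hG : ∀ x y, G.Adj (ι (p x)) (ι (p y)) ↔ G.Adj x y) :
    {f : V → V → Bool // IsOrientation G f ∧ OrientAcyclic f ∧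
        ∀ x y, f (ι (p x)) (ι (p y)) = f x y} ≃
      {g : W → W → Bool // IsOrientation (G.comap ι) g ∧ OrientAcyclic g} where
  toFun f := ⟨f.1 on ι, f.2.1.onFun fun _ _ => Iff.rfl, f.2.2.1.onFun ι⟩
  invFun g := ⟨g.1 on p, g.2.1.onFun fun x y => (hG x y).symm, g.2.2.onFun p,
    fun x y => by simp only [onFun, hpι _]⟩
  left_inv f := Subtype.ext <| funext₂ f.2.2.2
  right_inv g := Subtype.ext <| funext₂ fun x y => by simp only [onFun, hpι _]

end Retraction

section Bipartite

variable {α β γ : Type*}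

theorem completeBipartiteGraph_comap_sumMap_s5 {α' β' : Type*} (φ : α → α') (ψ : β → β') :
    (completeBipartiteGraph α' β').comap (Sum.map φ ψ) = completeBipartiteGraph α β := by
  ext (x | x) (y | y) <;> simp

theorem IsOrientation.forall_merge_eq_iff {f : α ⊕ β → α ⊕ β → Bool}
    (hf : IsOrientation (completeBipartiteGraph α β) f) {a₁ a₂ : α} [DecidableEq α] :
    (∀ x y, f (Sum.map (fun a => if a = a₂ then a₁ else a) id x)
        (Sum.map (fun a => if a = a₂ then a₁ else a) id y) = f x y) ↔
      ∀ b, f (.inl a₁) (.inr b) = f (.inl a₂) (.inr b) := by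
  refine ⟨fun h b => by simpa using h (.inl a₂) (.inr b), fun h => ?_⟩
  rintro (a | b) (a' | b')
  · simp [hf.2]
  · by_cases ha : a = a₂ <;> simp [ha, h]
  · by_cases ha : a' = a₂
    · simp [ha, hf.1 (.inr b) (.inl a₁), hf.1 (.inr b) (.inl a₂), h]
    · simp [ha]
  · rfl

theorem card_acyclic_with_equivalent_pair_of_equiv [DecidableEq α] {a₁ a₂ : α} (ha : a₁ ≠ a₂)
    (e : γ ≃ {a // a ≠ a₂}) :
    Nat.card {f : α ⊕ β → α ⊕ β → Bool //
        IsOrientation (completeBipartiteGraph α β) f ∧ OrientAcyclic f ∧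
          ∀ b, f (.inl a₁) (.inr b) = f (.inl a₂) (.inr b)} =
      numAcyclicOrientations (completeBipartiteGraph γ β) := by
  let merge : α → {a // a ≠ a₂} := fun a => if h : a = a₂ then ⟨a₁, ha⟩ else ⟨a, h⟩
  let ι : γ ⊕ β → α ⊕ β := Sum.map (fun c => (e c).1) id
  let p : α ⊕ β → γ ⊕ β := Sum.map (fun a => e.symm (merge a)) id
  have hpι : LeftInverse p ι := by
    rintro (c | b)
    · simp [p, ι, merge, (e c).2]
    · rfl
  have hιp : ∀ x, ι (p x) = Sum.map (fun a => if a = a₂ then a₁ else a) id x := by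
    rintro (a | b)
    · by_cases h : a = a₂ <;> simp [p, ι, merge, h]
    · rfl
  have hG : ∀ x y, (completeBipartiteGraph α β).Adj (ι (p x)) (ι (p y)) ↔
      (completeBipartiteGraph α β).Adj x y := by
    rintro (x | x) (y | y) <;> simp [hιp]
  have hH : (completeBipartiteGraph α β).comap ι = completeBipartiteGraph γ β :=
    completeBipartiteGraph_comap_sumMap_s5 _ _
  rw [numAcyclicOrientations, ← hH]
  refine Nat.card_congr ((Equiv.subtypeEquivRight fun f => ?_).trans
    (invariantAcyclicOrientationsEquiv hpι hG))
  refine and_congr_right fun hf => and_congr_right fun _ => ?_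
  simp only [hιp, hf.forall_merge_eq_iff]

end Bipartite

theorem card_acyclic_with_equivalent_pair_general (n₁ n₂ : ℕ)
    (a₁ a₂ : Fin n₁) (ha : a₁ ≠ a₂) :
    Nat.card {f : (Fin n₁ ⊕ Fin n₂) → (Fin n₁ ⊕ Fin n₂) → Bool //
        IsOrientation (completeBipartiteGraph (Fin n₁) (Fin n₂)) f ∧ OrientAcyclic f ∧
          ∀ b : Fin n₂, f (Sum.inl a₁) (Sum.inr b) = f (Sum.inl a₂) (Sum.inr b)} =
      numAcyclicOrientations (completeBipartiteGraph (Fin (n₁ - 1)) (Fin n₂)) := by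
  have : Fintype.card (Fin (n₁ - 1)) = Fintype.card {a // a ≠ a₂} := by simp
  exact card_acyclic_with_equivalent_pair_of_equiv ha (Fintype.equivOfCardEq this)

/-- For `n₁ > 1` and distinct vertices `a₁, a₂` in the block of size `n₁` of `K_{n₁,n₂}`,
the number of acyclic orientations in which every edge `{a₁,b}` is oriented the same way as
`{a₂,b}` equals `a(K_{n₁−1,n₂})`. -/
theorem card_acyclic_with_equivalent_pair (n₁ n₂ : ℕ) (h₁ : 1 < n₁) (h₂ : 1 ≤ n₂)
    (a₁ a₂ : Fin n₁) (ha : a₁ ≠ a₂) :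
    Nat.card {f : (Fin n₁ ⊕ Fin n₂) → (Fin n₁ ⊕ Fin n₂) → Bool //
        IsOrientation (completeBipartiteGraph (Fin n₁) (Fin n₂)) f ∧ OrientAcyclic f ∧
          ∀ b : Fin n₂, f (Sum.inl a₁) (Sum.inr b) = f (Sum.inl a₂) (Sum.inr b)} =
      numAcyclicOrientations (completeBipartiteGraph (Fin (n₁ - 1)) (Fin n₂)) :=
  card_acyclic_with_equivalent_pair_general n₁ n₂ a₁ a₂ ha
end

section
/- An orientation of the complete bipartite graph K_{n₁,n₂} is acyclic if and only if it contains no directed cycle of length 4. -/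
/-!
In an orientation of `K_{n₁,n₂}` without directed 4-cycles, any directed path `a → m → b → c`
can be shortcut to an arc `a → c`: the ends lie on opposite sides, so they are joined by an
arc, and the arc `c → a` would close a 4-cycle. Hence every directed walk collapses to one of
length at most two, and a closed walk of length one or two cannot exist in an orientation.
-/

open Relation

theorem Relation.TransGen.rel_or_comp_of_shortcut {α : Type*} {R : α → α → Prop} {a b : α}
    (shortcut : ∀ a m b c, R a m → R m b → R b c → R a c) (hab : TransGen R a b) :
    R a b ∨ Comp R R a b := by
  induction hab with
  | single hab => exact .inl hab
  | tail _ hbc ih =>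
    rcases ih with hab | ⟨m, ham, hmb⟩
    · exact .inr ⟨_, hab, hbc⟩
    · exact .inl (shortcut _ _ _ _ ham hmb hbc)

theorem completeBipartiteGraph_adj_iff_isLeft_ne {α β : Type*} {u v : α ⊕ β} :
    (completeBipartiteGraph α β).Adj u v ↔ u.isLeft ≠ v.isLeft := by
  cases u <;> cases v <;> simp

def HasFourCycle {V : Type*} (f : V → V → Bool) : Prop :=
  ∃ v₁ v₂ v₃ v₄ : V, [v₁, v₂, v₃, v₄].Nodup ∧
    f v₁ v₂ = true ∧ f v₂ v₃ = true ∧ f v₃ v₄ = true ∧ f v₄ v₁ = true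

theorem OrientAcyclic.not_hasFourCycle {V : Type*} {f : V → V → Bool} (hf : OrientAcyclic f) :
    ¬ HasFourCycle f := by
  rintro ⟨v₁, v₂, v₃, v₄, -, h₁₂, h₂₃, h₃₄, h₄₁⟩
  exact hf v₁ (.head h₁₂ (.head h₂₃ (.head h₃₄ (.single h₄₁))))

namespace IsOrientation

variable {V : Type*} {G : SimpleGraph V} {f : V → V → Bool} {u v : V}

theorem adj (hf : IsOrientation G f) (h : f u v = true) : G.Adj u v := by
  by_contra hnadj
  simp [hf.2 u v hnadj] at h

theorem eq_false_of_eq_true (hf : IsOrientation G f) (h : f u v = true) : f v u = false := by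
  simpa [h] using (hf.1 v u (hf.adj h).symm)

theorem eq_true_or_eq_true (hf : IsOrientation G f) (h : G.Adj u v) :
    f u v = true ∨ f v u = true := by
  cases huv : f u v <;> simp_all [hf.1 u v h]

theorem orientAcyclic_of_shortcut (hf : IsOrientation G f)
    (shortcut : ∀ a m b c, f a m = true → f m b = true → f b c = true → f a c = true) :
    OrientAcyclic f := by
  intro v hcycle
  rcases hcycle.rel_or_comp_of_shortcut shortcut with hvv | ⟨m, hvm, hmv⟩
  · simp [hf.eq_false_of_eq_true hvv] at hvv
  · simp [hf.eq_false_of_eq_true hvm] at hmv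

theorem shortcut_of_completeBipartite {α β : Type*} {f : α ⊕ β → α ⊕ β → Bool}
    (hf : IsOrientation (completeBipartiteGraph α β) f) (hno : ¬ HasFourCycle f)
    {a m b c : α ⊕ β} (ham : f a m = true) (hmb : f m b = true) (hbc : f b c = true) :
    f a c = true := by
  have sides : a.isLeft ≠ c.isLeft := by
    have h₁ := completeBipartiteGraph_adj_iff_isLeft_ne.mp (hf.adj ham)
    have h₂ := completeBipartiteGraph_adj_iff_isLeft_ne.mp (hf.adj hmb)
    have h₃ := completeBipartiteGraph_adj_iff_isLeft_ne.mp (hf.adj hbc)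
    grind
  have hac : (completeBipartiteGraph α β).Adj a c :=
    completeBipartiteGraph_adj_iff_isLeft_ne.mpr sides
  refine (hf.eq_true_or_eq_true hac).resolve_right fun hca =>
    hno ⟨a, m, b, c, ?_, ham, hmb, hbc, hca⟩
  have hab : a ≠ b := by rintro rfl; simp [hf.eq_false_of_eq_true ham] at hmb
  have hmc : m ≠ c := by rintro rfl; simp [hf.eq_false_of_eq_true hmb] at hbc
  simp [(hf.adj ham).ne, (hf.adj hmb).ne, (hf.adj hbc).ne, hac.ne, hab, hmc]

end IsOrientation

/-- An orientation of the complete bipartite graph `K_{n₁,n₂}` is acyclic if and only if it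
contains no directed cycle of length 4. -/
theorem orientation_acyclic_iff_no_four_cycle (n₁ n₂ : ℕ)
    (f : (Fin n₁ ⊕ Fin n₂) → (Fin n₁ ⊕ Fin n₂) → Bool)
    (hf : IsOrientation (completeBipartiteGraph (Fin n₁) (Fin n₂)) f) :
    OrientAcyclic f ↔
      ¬ ∃ v₁ v₂ v₃ v₄ : Fin n₁ ⊕ Fin n₂, [v₁, v₂, v₃, v₄].Nodup ∧
        f v₁ v₂ = true ∧ f v₂ v₃ = true ∧ f v₃ v₄ = true ∧ f v₄ v₁ = true :=
  ⟨OrientAcyclic.not_hasFourCycle, fun hno =>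
    hf.orientAcyclic_of_shortcut fun _ _ _ _ => hf.shortcut_of_completeBipartite hno⟩
end
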